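/- arXiv:1707.06200 — 12 statements merged into one kernel-verified Lean document; each statement's English description precedes it below -/
import Mathlib

section
/- If p is a synchronous local hidden variables strategy, i.e. p(a,b|x,x') = Σ_ω μ(ω) p_A(a|x,ω) p_B(b|x',ω) with μ a probability distribution on a finite set Ω and p_A, p_B conditional probability distributions, and p(a,b|x,x) = 0 whenever a ≠ b, then for every ω in the support of μ and every x there exists a unique y₀ with p_A(y₀|x,ω) = 1 and p_B(y₀|x,ω) = 1. -/
theorem stmt_0
    {X Y Ω : Type} [Fintype X] [Fintype Y] [Fintype Ω]
    [Nonempty X] [Nonempty Y] [Nonempty Ω]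
    (μ : Ω → ℝ) (hμ0 : ∀ ω, 0 ≤ μ ω) (hμ1 : ∑ ω, μ ω = 1)
    (pA pB : Y → X → Ω → ℝ)
    (hA0 : ∀ y x ω, 0 ≤ pA y x ω) (hB0 : ∀ y x ω, 0 ≤ pB y x ω)
    (hA1 : ∀ x ω, ∑ y, pA y x ω = 1) (hB1 : ∀ x ω, ∑ y, pB y x ω = 1)
    (p : Y → Y → X → X → ℝ)
    (hp : ∀ a b x x', p a b x x' = ∑ ω, μ ω * pA a x ω * pB b x' ω)
    (hsync : ∀ a b x, a ≠ b → p a b x x = 0) :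
    ∀ ω, 0 < μ ω → ∀ x, ∃! y₀ : Y, pA y₀ x ω = 1 ∧ pB y₀ x ω = 1 := by
  intro ω hω x
  -- off-diagonal products vanish
  have key : ∀ a b : Y, a ≠ b → pA a x ω * pB b x ω = 0 := by
    intro a b hab
    have h0 : ∑ ω', μ ω' * pA a x ω' * pB b x ω' = 0 := by
      rw [← hp]; exact hsync a b x hab
    have hterm := (Finset.sum_eq_zero_iff_of_nonneg
      (fun ω' _ => mul_nonneg (mul_nonneg (hμ0 ω') (hA0 a x ω')) (hB0 b x ω'))).mp
      h0 ω (Finset.mem_univ ω)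
    rw [mul_assoc] at hterm
    exact (mul_eq_zero.mp hterm).resolve_left (ne_of_gt hω)
  have hdiag : ∀ a : Y, ∑ b, pA a x ω * pB b x ω = pA a x ω * pB a x ω := by
    intro a
    refine Finset.sum_eq_single a (fun b _ hba => key a b (fun h => hba h.symm))
      (fun h => absurd (Finset.mem_univ a) h)
  have hsum : ∑ a, pA a x ω * pB a x ω = 1 := by
    calc ∑ a, pA a x ω * pB a x ω = ∑ a, ∑ b, pA a x ω * pB b x ω := by
          exact Finset.sum_congr rfl (fun a _ => (hdiag a).symm)
      _ = ∑ a, pA a x ω * 1 := by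
          refine Finset.sum_congr rfl (fun a _ => ?_)
          rw [← Finset.mul_sum, hB1]
      _ = 1 := by simp [hA1 x ω]
  have hB_le : ∀ b, pB b x ω ≤ 1 := fun b =>
    (hB1 x ω) ▸ Finset.single_le_sum (fun i _ => hB0 i x ω) (Finset.mem_univ b)
  have hA_le : ∀ a, pA a x ω ≤ 1 := fun a =>
    (hA1 x ω) ▸ Finset.single_le_sum (fun i _ => hA0 i x ω) (Finset.mem_univ a)
  have heqA : ∀ a : Y, pA a x ω * pB a x ω = pA a x ω := by
    have := (Finset.sum_eq_sum_iff_of_le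
      (f := fun a : Y => pA a x ω * pB a x ω) (g := fun a : Y => pA a x ω)
      (fun a _ => mul_le_of_le_one_right (hA0 a x ω) (hB_le a))).mp
      (by rw [hsum, hA1])
    exact fun a => this a (Finset.mem_univ a)
  have heqB : ∀ a : Y, pA a x ω * pB a x ω = pB a x ω := by
    have := (Finset.sum_eq_sum_iff_of_le
      (f := fun a : Y => pA a x ω * pB a x ω) (g := fun a : Y => pB a x ω)
      (fun a _ => mul_le_of_le_one_left (hB0 a x ω) (hA_le a))).mp
      (by rw [hsum, hB1])
    exact fun a => this a (Finset.mem_univ a)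
  have hAB : ∀ a : Y, pA a x ω = pB a x ω := fun a => (heqA a).symm.trans (heqB a)
  have h01 : ∀ a : Y, pA a x ω = 0 ∨ pA a x ω = 1 := by
    intro a
    have h : pA a x ω * pA a x ω = pA a x ω := by
      have := heqA a; rwa [← hAB a] at this
    have : pA a x ω * (pA a x ω - 1) = 0 := by ring_nf; linarith [h]
    rcases mul_eq_zero.mp this with h' | h'
    · exact Or.inl h'
    · exact Or.inr (by linarith)
  obtain ⟨y₀, hy₀⟩ := Finset.exists_ne_zero_of_sum_ne_zero
    (by rw [hA1 x ω]; norm_num : ∑ a, pA a x ω ≠ 0)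
  have hy₀1 : pA y₀ x ω = 1 := (h01 y₀).resolve_left hy₀.2
  have hy₀B : pB y₀ x ω = 1 := (hAB y₀) ▸ hy₀1
  refine ⟨y₀, ⟨hy₀1, hy₀B⟩, ?_⟩
  intro y hy
  by_contra hne
  have := key y y₀ hne
  rw [hy.1, hy₀B] at this
  norm_num at this
end

section
/- Every synchronous local hidden variables strategy p on finite sets X, Y has the form p(a,b|x,x') = Σ_{f : X → Y} ν(f) · 1[a = f(x)] · 1[b = f(x')] for some probability distribution ν on the set of functions X → Y. -/
theorem stmt_1
    {X Y Ω : Type} [Fintype X] [Fintype Y] [Fintype Ω] [DecidableEq X] [DecidableEq Y]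
    [Nonempty X] [Nonempty Y] [Nonempty Ω]
    (μ : Ω → ℝ) (hμ0 : ∀ ω, 0 ≤ μ ω) (hμ1 : ∑ ω, μ ω = 1)
    (pA pB : Y → X → Ω → ℝ)
    (hA0 : ∀ y x ω, 0 ≤ pA y x ω) (hB0 : ∀ y x ω, 0 ≤ pB y x ω)
    (hA1 : ∀ x ω, ∑ y, pA y x ω = 1) (hB1 : ∀ x ω, ∑ y, pB y x ω = 1)
    (p : Y → Y → X → X → ℝ)
    (hp : ∀ a b x x', p a b x x' = ∑ ω, μ ω * pA a x ω * pB b x' ω)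
    (hsync : ∀ a b x, a ≠ b → p a b x x = 0) :
    ∃ ν : (X → Y) → ℝ, (∀ f, 0 ≤ ν f) ∧ (∑ f, ν f = 1) ∧
      ∀ a b x x', p a b x x' =
        ∑ f, ν f * (if a = f x then (1:ℝ) else 0) * (if b = f x' then (1:ℝ) else 0) := by
  classical
  -- off-diagonal terms vanish for ω with positive weight
  have hoff : ∀ ω x a b, a ≠ b → 0 < μ ω → pA a x ω * pB b x ω = 0 := by
    intro ω x a b hab hμ
    have h0 : ∑ ω', μ ω' * pA a x ω' * pB b x ω' = 0 := by
      rw [← hp]; exact hsync a b x hab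
    have hterm : μ ω * pA a x ω * pB b x ω = 0 := by
      have := (Finset.sum_eq_zero_iff_of_nonneg
        (fun ω' _ => mul_nonneg (mul_nonneg (hμ0 ω') (hA0 a x ω')) (hB0 b x ω'))).mp
          h0 ω (Finset.mem_univ ω)
      exact this
    have := mul_eq_zero.mp hterm
    rcases this with h | h
    · rcases mul_eq_zero.mp h with h | h
      · exact absurd h (ne_of_gt hμ)
      · rw [h]; ring
    · rw [h]; ring
  -- diagonal sum equals 1
  have hdiag : ∀ ω x, 0 < μ ω → ∑ a, pA a x ω * pB a x ω = 1 := by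
    intro ω x hμ
    have h1 : (∑ a, pA a x ω) * (∑ b, pB b x ω) = 1 := by
      rw [hA1, hB1]; ring
    rw [Finset.sum_mul_sum] at h1
    rw [← h1]
    apply Finset.sum_congr rfl
    intro a _
    rw [Finset.sum_eq_single a]
    · intro b _ hba; exact hoff ω x a b (Ne.symm hba) hμ
    · intro h; exact absurd (Finset.mem_univ a) h
  have hle1A : ∀ ω x a, pA a x ω ≤ 1 := by
    intro ω x a
    calc pA a x ω ≤ ∑ y, pA y x ω :=
          Finset.single_le_sum (fun y _ => hA0 y x ω) (Finset.mem_univ a)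
      _ = 1 := hA1 x ω
  have hle1B : ∀ ω x a, pB a x ω ≤ 1 := by
    intro ω x a
    calc pB a x ω ≤ ∑ y, pB y x ω :=
          Finset.single_le_sum (fun y _ => hB0 y x ω) (Finset.mem_univ a)
      _ = 1 := hB1 x ω
  have hAeq : ∀ ω x a, 0 < μ ω → pA a x ω * pB a x ω = pA a x ω := by
    intro ω x a hμ
    have hs : ∑ y, (pA y x ω - pA y x ω * pB y x ω) = 0 := by
      rw [Finset.sum_sub_distrib, hA1, hdiag ω x hμ]; ring
    have h := (Finset.sum_eq_zero_iff_of_nonneg (fun y _ => by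
      have := hle1B ω x y
      nlinarith [hA0 y x ω, hB0 y x ω])).mp hs a (Finset.mem_univ a)
    linarith
  have hBeq : ∀ ω x a, 0 < μ ω → pA a x ω * pB a x ω = pB a x ω := by
    intro ω x a hμ
    have hs : ∑ y, (pB y x ω - pA y x ω * pB y x ω) = 0 := by
      rw [Finset.sum_sub_distrib, hB1, hdiag ω x hμ]; ring
    have h := (Finset.sum_eq_zero_iff_of_nonneg (fun y _ => by
      have := hle1A ω x y
      nlinarith [hA0 y x ω, hB0 y x ω])).mp hs a (Finset.mem_univ a)
    linarith
  -- pA = pB and values in {0,1}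
  have hAB : ∀ ω x a, 0 < μ ω → pA a x ω = pB a x ω := by
    intro ω x a hμ
    rw [← hAeq ω x a hμ, hBeq ω x a hμ]
  have h01 : ∀ ω x a, 0 < μ ω → pA a x ω = 0 ∨ pA a x ω = 1 := by
    intro ω x a hμ
    have h := hAeq ω x a hμ
    rw [← hAB ω x a hμ] at h
    have h2 : pA a x ω * (pA a x ω - 1) = 0 := by nlinarith
    rcases mul_eq_zero.mp h2 with h' | h'
    · left; exact h'
    · right; linarith
  -- existence of the determined value
  have hex : ∀ ω x, 0 < μ ω → ∃ y, pA y x ω = 1 := by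
    intro ω x hμ
    by_contra hc
    push_neg at hc
    have hall : ∀ y, pA y x ω = 0 := by
      intro y
      rcases h01 ω x y hμ with h | h
      · exact h
      · exact absurd h (hc y)
    have : (0:ℝ) = 1 := by
      rw [← hA1 x ω]
      exact (Finset.sum_eq_zero (fun y _ => hall y)).symm
    norm_num at this
  -- the deterministic function
  set f : Ω → X → Y := fun ω x =>
    if h : ∃ y, pA y x ω = 1 then h.choose else Classical.arbitrary Y with hf
  have hfval : ∀ ω x, 0 < μ ω → pA (f ω x) x ω = 1 := by
    intro ω x hμ
    have h := hex ω x hμ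
    simp only [hf, dif_pos h]
    exact h.choose_spec
  have hind : ∀ ω x a, 0 < μ ω → pA a x ω = if a = f ω x then 1 else 0 := by
    intro ω x a hμ
    by_cases h : a = f ω x
    · rw [if_pos h, h]; exact hfval ω x hμ
    · rw [if_neg h]
      rcases h01 ω x a hμ with h' | h'
      · exact h'
      · exfalso
        have h1 := Finset.sum_erase_add Finset.univ (fun y => pA y x ω)
          (Finset.mem_univ (f ω x))
        rw [hA1 x ω] at h1
        have h2 : pA a x ω ≤ ∑ y ∈ Finset.univ.erase (f ω x), pA y x ω :=
          Finset.single_le_sum (fun y _ => hA0 y x ω)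
            (Finset.mem_erase.mpr ⟨h, Finset.mem_univ a⟩)
        have h3 := hfval ω x hμ
        rw [h'] at h2
        linarith
  have hindB : ∀ ω x a, 0 < μ ω → pB a x ω = if a = f ω x then 1 else 0 := by
    intro ω x a hμ
    rw [← hAB ω x a hμ]; exact hind ω x a hμ
  -- the distribution on functions
  refine ⟨fun g => ∑ ω, if f ω = g then μ ω else 0, ?_, ?_, ?_⟩
  · intro g
    apply Finset.sum_nonneg
    intro ω _
    split_ifs
    · exact hμ0 ω
    · exact le_refl 0
  · dsimp only
    rw [Finset.sum_comm, ← hμ1]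
    apply Finset.sum_congr rfl
    intro ω _
    simp
  · intro a b x x'
    dsimp only
    rw [hp]
    have hswap :
        ∑ g : X → Y, (∑ ω, if f ω = g then μ ω else 0) *
          (if a = g x then (1:ℝ) else 0) * (if b = g x' then (1:ℝ) else 0)
        = ∑ ω, ∑ g : X → Y, (if f ω = g then μ ω else 0) *
          (if a = g x then (1:ℝ) else 0) * (if b = g x' then (1:ℝ) else 0) := by
      rw [Finset.sum_comm]
      apply Finset.sum_congr rfl
      intro g _
      rw [Finset.sum_mul, Finset.sum_mul]
    rw [hswap]
    apply Finset.sum_congr rfl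
    intro ω _
    have hinner : ∑ g : X → Y, (if f ω = g then μ ω else 0) *
        (if a = g x then (1:ℝ) else 0) * (if b = g x' then (1:ℝ) else 0)
        = μ ω * (if a = f ω x then (1:ℝ) else 0) * (if b = f ω x' then (1:ℝ) else 0) := by
      have : ∀ g : X → Y, (if f ω = g then μ ω else 0) *
          (if a = g x then (1:ℝ) else 0) * (if b = g x' then (1:ℝ) else 0)
          = if f ω = g then μ ω * (if a = g x then (1:ℝ) else 0) *
              (if b = g x' then (1:ℝ) else 0) else 0 := by
        intro g
        by_cases h : f ω = g
        · rw [if_pos h, if_pos h]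
        · rw [if_neg h, if_neg h]; ring
      rw [Finset.sum_congr rfl (fun g _ => this g)]
      exact Finset.sum_ite_eq Finset.univ (f ω)
        (fun g => μ ω * (if a = g x then (1:ℝ) else 0) * (if b = g x' then (1:ℝ) else 0))
        |>.trans (by rw [if_pos (Finset.mem_univ _)])
    rw [hinner]
    rcases (hμ0 ω).lt_or_eq with hμ | hμ
    · rw [hind ω x a hμ, hindB ω x' b hμ]
    · rw [← hμ]; ring
end

section
/- Every synchronous local hidden variables strategy is symmetric: p(a,b|x,x') = p(b,a|x',x) for all a, b ∈ Y and x, x' ∈ X. -/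
theorem stmt_2
    {X Y Ω : Type} [Fintype X] [Fintype Y] [Fintype Ω]
    [Nonempty X] [Nonempty Y] [Nonempty Ω]
    (μ : Ω → ℝ) (hμ0 : ∀ ω, 0 ≤ μ ω) (hμ1 : ∑ ω, μ ω = 1)
    (pA pB : Y → X → Ω → ℝ)
    (hA0 : ∀ y x ω, 0 ≤ pA y x ω) (hB0 : ∀ y x ω, 0 ≤ pB y x ω)
    (hA1 : ∀ x ω, ∑ y, pA y x ω = 1) (hB1 : ∀ x ω, ∑ y, pB y x ω = 1)
    (p : Y → Y → X → X → ℝ)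
    (hp : ∀ a b x x', p a b x x' = ∑ ω, μ ω * pA a x ω * pB b x' ω)
    (hsync : ∀ a b x, a ≠ b → p a b x x = 0) :
    ∀ a b x x', p a b x x' = p b a x' x := by
  -- Step 1: for μ ω > 0, a ≠ b, pA a x ω * pB b x ω = 0
  have key : ∀ a b x ω, μ ω ≠ 0 → a ≠ b → pA a x ω * pB b x ω = 0 := by
    intro a b x ω hω hab
    have h0 : ∑ ω, μ ω * pA a x ω * pB b x ω = 0 := by
      rw [← hp]; exact hsync a b x hab
    have hterm : μ ω * pA a x ω * pB b x ω = 0 := by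
      have := (Finset.sum_eq_zero_iff_of_nonneg (fun ω' _ => mul_nonneg (mul_nonneg (hμ0 ω') (hA0 _ _ _)) (hB0 _ _ _))).mp h0 ω
        (Finset.mem_univ ω)
      exact this
    have hμpos : 0 < μ ω := lt_of_le_of_ne (hμ0 ω) (Ne.symm hω)
    rcases mul_eq_zero.mp hterm with h | h
    · rcases mul_eq_zero.mp h with h | h
      · exact absurd h hω
      · rw [h, zero_mul]
    · rw [h, mul_zero]
  -- Step 2: pA = pB on support
  have eqAB : ∀ a x ω, μ ω ≠ 0 → pA a x ω = pB a x ω := by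
    intro a x ω hω
    have h1 : pA a x ω = pA a x ω * pB a x ω := by
      calc pA a x ω = pA a x ω * ∑ b, pB b x ω := by rw [hB1, mul_one]
        _ = ∑ b, pA a x ω * pB b x ω := by rw [Finset.mul_sum]
        _ = pA a x ω * pB a x ω := by
            rw [Finset.sum_eq_single a]
            · intro b _ hb; exact key a b x ω hω (Ne.symm hb)
            · intro h; exact absurd (Finset.mem_univ a) h
    have h2 : pB a x ω = pA a x ω * pB a x ω := by
      calc pB a x ω = (∑ b, pA b x ω) * pB a x ω := by rw [hA1, one_mul]
        _ = ∑ b, pA b x ω * pB a x ω := by rw [Finset.sum_mul]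
        _ = pA a x ω * pB a x ω := by
            rw [Finset.sum_eq_single a]
            · intro b _ hb; exact key b a x ω hω hb
            · intro h; exact absurd (Finset.mem_univ a) h
    rw [h2]; exact h1
  intro a b x x'
  rw [hp, hp]
  apply Finset.sum_congr rfl
  intro ω _
  by_cases hω : μ ω = 0
  · simp [hω]
  · rw [eqAB a x ω hω, ← eqAB b x' ω hω]; ring
end

section
/- Let ρ be a density operator on a finite-dimensional Hilbert space H_A ⊗ H_B and for each x ∈ X let {E^x_y}_{y∈Y}, {F^x_y}_{y∈Y} be POVMs on H_A, H_B respectively (positive semidefinite operators summing to the identity). Suppose tr_A(ρ) and tr_B(ρ) have full rank and the correlation p(a,b|x,x') = tr(ρ (E^x_a ⊗ F^{x'}_b)) is synchronous (p(a,b|x,x) = 0 for a ≠ b). Then each E^x_y and each F^x_y is a projection. -/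
/-!
A vanishing trace of a product of two positive semidefinite matrices forces the product itself
to vanish, so synchronicity gives `ρ (E_a ⊗ F_b) = 0` for `a ≠ b`. Summing over the other
outcome yields `ρ (E_a ⊗ 1) = ρ (E_a ⊗ F_a) = ρ (1 ⊗ F_a)`, and from this
`ρ (E_a² ⊗ 1) = ρ (1 ⊗ F_a) (E_a ⊗ 1) = ρ (E_a ⊗ 1)`. Taking the partial trace over `B` turns
this into `tr_B(ρ) E_a² = tr_B(ρ) E_a`, and `tr_B(ρ)` is invertible. The argument for `F_a` is
symmetric.
-/

open Matrix Kronecker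
open scoped ComplexOrder

/-- partial trace over the first factor: `tr_A ρ` acts on `H_B`. -/
noncomputable def ptraceA {dA dB : ℕ} (ρ : Matrix (Fin dA × Fin dB) (Fin dA × Fin dB) ℂ) :
    Matrix (Fin dB) (Fin dB) ℂ :=
  fun i j => ∑ k : Fin dA, ρ (k, i) (k, j)

/-- partial trace over the second factor: `tr_B ρ` acts on `H_A`. -/
noncomputable def ptraceB {dA dB : ℕ} (ρ : Matrix (Fin dA × Fin dB) (Fin dA × Fin dB) ℂ) :
    Matrix (Fin dA) (Fin dA) ℂ :=
  fun i j => ∑ k : Fin dB, ρ (i, k) (j, k)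

namespace Matrix

open scoped MatrixOrder in
theorem PosSemidef.mul_eq_zero_of_trace_mul_eq_zero {n 𝕜 : Type*} [Fintype n] [RCLike 𝕜]
    {P Q : Matrix n n 𝕜} (hP : P.PosSemidef) (hQ : Q.PosSemidef) (h : (P * Q).trace = 0) :
    P * Q = 0 := by
  classical
  obtain ⟨A, rfl⟩ := CStarAlgebra.nonneg_iff_eq_star_mul_self.mp hP.nonneg
  obtain ⟨B, rfl⟩ := CStarAlgebra.nonneg_iff_eq_star_mul_self.mp hQ.nonneg
  simp only [star_eq_conjTranspose] at h ⊢
  -- `tr(AᴴA BᴴB) = tr((ABᴴ)(ABᴴ)ᴴ)`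
  have hAB : A * Bᴴ = 0 := by
    rw [← trace_mul_conjTranspose_self_eq_zero_iff, conjTranspose_mul,
      conjTranspose_conjTranspose, ← h, trace_mul_comm (Aᴴ * A)]
    simp only [Matrix.mul_assoc]
    rw [trace_mul_comm A]
    simp only [Matrix.mul_assoc]
  rw [Matrix.mul_assoc, ← Matrix.mul_assoc A, hAB, Matrix.zero_mul, Matrix.mul_zero]

variable {l m n p ι α : Type*} [CommSemiring α]

theorem kronecker_sum (A : Matrix l m α) (s : Finset ι) (F : ι → Matrix n p α) :
    A ⊗ₖ ∑ i ∈ s, F i = ∑ i ∈ s, A ⊗ₖ F i :=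
  map_sum (kroneckerBilinear (R := α) A) F s

theorem sum_kronecker (s : Finset ι) (E : ι → Matrix l m α) (B : Matrix n p α) :
    (∑ i ∈ s, E i) ⊗ₖ B = ∑ i ∈ s, E i ⊗ₖ B :=
  map_sum ((kroneckerBilinear (R := α)).flip B) E s

end Matrix

section PartialTrace

variable {dA dB : ℕ}

theorem ptraceB_mul_kronecker_one (ρ : Matrix (Fin dA × Fin dB) (Fin dA × Fin dB) ℂ)
    (M : Matrix (Fin dA) (Fin dA) ℂ) : ptraceB (ρ * (M ⊗ₖ 1)) = ptraceB ρ * M := by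
  ext i j
  simp only [ptraceB, mul_apply, Fintype.sum_prod_type, kronecker_apply, one_apply, mul_ite,
    mul_zero, mul_one, Finset.sum_ite_eq', Finset.mem_univ, if_true, Finset.sum_mul]
  rw [Finset.sum_comm]

theorem ptraceA_mul_one_kronecker (ρ : Matrix (Fin dA × Fin dB) (Fin dA × Fin dB) ℂ)
    (N : Matrix (Fin dB) (Fin dB) ℂ) : ptraceA (ρ * (1 ⊗ₖ N)) = ptraceA ρ * N := by
  ext i j
  simp only [ptraceA, mul_apply, Fintype.sum_prod_type, kronecker_apply, one_apply, ite_mul,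
    one_mul, zero_mul, mul_ite, mul_zero, Finset.sum_ite_irrel, Finset.sum_const_zero,
    Finset.sum_ite_eq', Finset.mem_univ, if_true, Finset.sum_mul]
  rw [Finset.sum_comm]

section Synchronous

variable {m n Y R : Type*} [Fintype m] [Fintype n] [Fintype Y] [CommSemiring R]
  {ρ : Matrix (m × n) (m × n) R}

theorem mul_kronecker_one_eq_of_orthogonal [DecidableEq n] {A : Matrix m m R}
    {F : Y → Matrix n n R} (hF : ∑ b, F b = 1) {a : Y} (h : ∀ b, b ≠ a → ρ * (A ⊗ₖ F b) = 0) :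
    ρ * (A ⊗ₖ 1) = ρ * (A ⊗ₖ F a) := by
  rw [← hF, kronecker_sum, Finset.mul_sum, Fintype.sum_eq_single a h]

theorem mul_one_kronecker_eq_of_orthogonal [DecidableEq m] {E : Y → Matrix m m R}
    {B : Matrix n n R} (hE : ∑ a, E a = 1) {b : Y} (h : ∀ a, a ≠ b → ρ * (E a ⊗ₖ B) = 0) :
    ρ * (1 ⊗ₖ B) = ρ * (E b ⊗ₖ B) := by
  rw [← hE, sum_kronecker, Finset.mul_sum, Fintype.sum_eq_single b h]

variable [DecidableEq m] [DecidableEq n] {A : Matrix m m R} {B : Matrix n n R}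

theorem mul_mul_self_kronecker_one (hA : ρ * (A ⊗ₖ 1) = ρ * (A ⊗ₖ B))
    (hB : ρ * (1 ⊗ₖ B) = ρ * (A ⊗ₖ B)) : ρ * ((A * A) ⊗ₖ 1) = ρ * (A ⊗ₖ 1) :=
  calc ρ * ((A * A) ⊗ₖ 1) = ρ * (A ⊗ₖ 1) * (A ⊗ₖ 1) := by
        rw [Matrix.mul_assoc, ← mul_kronecker_mul, mul_one]
    _ = ρ * (1 ⊗ₖ B) * (A ⊗ₖ 1) := by rw [hA, hB]
    _ = ρ * (A ⊗ₖ 1) := by rw [Matrix.mul_assoc, ← mul_kronecker_mul, one_mul, mul_one, hA]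

theorem mul_one_kronecker_mul_self (hA : ρ * (A ⊗ₖ 1) = ρ * (A ⊗ₖ B))
    (hB : ρ * (1 ⊗ₖ B) = ρ * (A ⊗ₖ B)) : ρ * (1 ⊗ₖ (B * B)) = ρ * (1 ⊗ₖ B) :=
  calc ρ * (1 ⊗ₖ (B * B)) = ρ * (1 ⊗ₖ B) * (1 ⊗ₖ B) := by
        rw [Matrix.mul_assoc, ← mul_kronecker_mul, mul_one]
    _ = ρ * (A ⊗ₖ 1) * (1 ⊗ₖ B) := by rw [hA, hB]
    _ = ρ * (1 ⊗ₖ B) := by rw [Matrix.mul_assoc, ← mul_kronecker_mul, one_mul, mul_one, hB]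

end Synchronous

theorem mul_self_eq_of_mul_mul_self_kronecker_one
    {ρ : Matrix (Fin dA × Fin dB) (Fin dA × Fin dB) ℂ} (hρ : (ptraceB ρ).det ≠ 0)
    {A : Matrix (Fin dA) (Fin dA) ℂ} (h : ρ * ((A * A) ⊗ₖ 1) = ρ * (A ⊗ₖ 1)) :
    A * A = A := by
  have h' := congrArg ptraceB h
  rw [ptraceB_mul_kronecker_one, ptraceB_mul_kronecker_one] at h'
  exact ((isUnit_iff_isUnit_det _).mpr hρ.isUnit).mul_left_cancel h'

theorem mul_self_eq_of_mul_one_kronecker_mul_self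
    {ρ : Matrix (Fin dA × Fin dB) (Fin dA × Fin dB) ℂ} (hρ : (ptraceA ρ).det ≠ 0)
    {B : Matrix (Fin dB) (Fin dB) ℂ} (h : ρ * (1 ⊗ₖ (B * B)) = ρ * (1 ⊗ₖ B)) :
    B * B = B := by
  have h' := congrArg ptraceA h
  rw [ptraceA_mul_one_kronecker, ptraceA_mul_one_kronecker] at h'
  exact ((isUnit_iff_isUnit_det _).mpr hρ.isUnit).mul_left_cancel h'

end PartialTrace

theorem stmt_4_general
    {X Y : Type} [Fintype Y]
    {dA dB : ℕ}
    (ρ : Matrix (Fin dA × Fin dB) (Fin dA × Fin dB) ℂ)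
    (hρpsd : ρ.PosSemidef)
    (hfullA : (ptraceA ρ).det ≠ 0) (hfullB : (ptraceB ρ).det ≠ 0)
    (E : X → Y → Matrix (Fin dA) (Fin dA) ℂ)
    (F : X → Y → Matrix (Fin dB) (Fin dB) ℂ)
    (hE : ∀ x y, (E x y).PosSemidef) (hF : ∀ x y, (F x y).PosSemidef)
    (hE1 : ∀ x, ∑ y, E x y = 1) (hF1 : ∀ x, ∑ y, F x y = 1)
    (hsync : ∀ x a b, a ≠ b → (ρ * (E x a ⊗ₖ F x b)).trace = 0) :
    ∀ x y, E x y * E x y = E x y ∧ F x y * F x y = F x y := by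
  intro x a
  have horth : ∀ a b, a ≠ b → ρ * (E x a ⊗ₖ F x b) = 0 := fun a b hab =>
    hρpsd.mul_eq_zero_of_trace_mul_eq_zero ((hE x a).kronecker (hF x b)) (hsync x a b hab)
  have hEa : ρ * (E x a ⊗ₖ 1) = ρ * (E x a ⊗ₖ F x a) :=
    mul_kronecker_one_eq_of_orthogonal (hF1 x) fun b hb => horth a b hb.symm
  have hFa : ρ * (1 ⊗ₖ F x a) = ρ * (E x a ⊗ₖ F x a) :=
    mul_one_kronecker_eq_of_orthogonal (hE1 x) fun b hb => horth b a hb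
  exact ⟨mul_self_eq_of_mul_mul_self_kronecker_one hfullB (mul_mul_self_kronecker_one hEa hFa),
    mul_self_eq_of_mul_one_kronecker_mul_self hfullA (mul_one_kronecker_mul_self hEa hFa)⟩

theorem stmt_4
    {X Y : Type} [Fintype X] [Fintype Y] [Nonempty X] [Nonempty Y]
    {dA dB : ℕ}
    (ρ : Matrix (Fin dA × Fin dB) (Fin dA × Fin dB) ℂ)
    (hρpsd : ρ.PosSemidef) (hρtr : ρ.trace = 1)
    (hfullA : (ptraceA ρ).det ≠ 0) (hfullB : (ptraceB ρ).det ≠ 0)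
    (E : X → Y → Matrix (Fin dA) (Fin dA) ℂ)
    (F : X → Y → Matrix (Fin dB) (Fin dB) ℂ)
    (hE : ∀ x y, (E x y).PosSemidef) (hF : ∀ x y, (F x y).PosSemidef)
    (hE1 : ∀ x, ∑ y, E x y = 1) (hF1 : ∀ x, ∑ y, F x y = 1)
    (hsync : ∀ x a b, a ≠ b → (ρ * (E x a ⊗ₖ F x b)).trace = 0) :
    ∀ x y, E x y * E x y = E x y ∧ F x y * F x y = F x y :=
  stmt_4_general ρ hρpsd hfullA hfullB E F hE hF hE1 hF1 hsync
end

section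
/- Under the hypotheses that p(a,b|x,x') = tr(ρ(E^x_a ⊗ F^{x'}_b)) is a synchronous quantum correlation with tr_A(ρ), tr_B(ρ) of full rank, each E^x_y commutes with tr_B(ρ) and each F^x_y commutes with tr_A(ρ). -/
open Matrix Kronecker
open scoped ComplexOrder

/-!
For positive semidefinite `ρ = aᴴ a` and `M = bᴴ b` one has `tr (ρ M) = ‖a bᴴ‖²`, so synchronicity
forces `ρ (E_a ⊗ F_b) = 0 = (E_a ⊗ F_b) ρ` for `a ≠ b`. Summing over `b` (resp. `a`) with the POVM
relations, `ρ` cannot tell `E_y ⊗ 1` from `E_y ⊗ F_y` from `1 ⊗ F_y`, on either side. Hence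
`E_y tr_B ρ = tr_B ((1 ⊗ F_y) ρ) = tr_B (ρ (1 ⊗ F_y)) = tr_B ρ E_y`, the middle step being
cyclicity of the trace on the factor that is traced out; symmetrically for `F_y` and `tr_A ρ`.
-/

namespace Matrix

open scoped MatrixOrder in
theorem PosSemidef.mul_eq_zero_of_trace_mul_eq_zero_s5 {n 𝕜 : Type*} [Fintype n] [RCLike 𝕜]
    {A B : Matrix n n 𝕜} (hA : A.PosSemidef) (hB : B.PosSemidef) (h : (A * B).trace = 0) :
    A * B = 0 := by
  classical
  obtain ⟨a, rfl⟩ := CStarAlgebra.nonneg_iff_eq_star_mul_self.mp hA.nonneg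
  obtain ⟨b, rfl⟩ := CStarAlgebra.nonneg_iff_eq_star_mul_self.mp hB.nonneg
  simp only [star_eq_conjTranspose] at h ⊢
  have hab : a * bᴴ = 0 := by
    rw [← trace_conjTranspose_mul_self_eq_zero_iff, ← h, conjTranspose_mul,
      conjTranspose_conjTranspose, Matrix.mul_assoc, trace_mul_comm b]
    simp only [Matrix.mul_assoc]
  rw [Matrix.mul_assoc, ← Matrix.mul_assoc a, hab, Matrix.zero_mul, Matrix.mul_zero]

theorem map_kronecker_one_eq_map_one_kronecker {ι m n R M : Type*} [Fintype ι] [DecidableEq m]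
    [DecidableEq n] [CommSemiring R] [AddCommMonoid M] (φ : Matrix (m × n) (m × n) R →+ M)
    {E : ι → Matrix m m R} {F : ι → Matrix n n R} (hE : ∑ a, E a = 1) (hF : ∑ b, F b = 1)
    (h : ∀ a b, a ≠ b → φ (E a ⊗ₖ F b) = 0) (y : ι) :
    φ (E y ⊗ₖ 1) = φ (1 ⊗ₖ F y) := by
  calc φ (E y ⊗ₖ 1)
      = ∑ b, φ (E y ⊗ₖ F b) := by
        rw [← hF, ← map_sum]; exact congrArg φ (map_sum (kroneckerBilinear (R := R) (E y)) F _)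
    _ = φ (E y ⊗ₖ F y) := Fintype.sum_eq_single y fun b hb => h y b hb.symm
    _ = ∑ a, φ (E a ⊗ₖ F y) := (Fintype.sum_eq_single y fun a ha => h a y ha).symm
    _ = φ (1 ⊗ₖ F y) := by
        rw [← hE, ← map_sum]
        exact congrArg φ (map_sum ((kroneckerBilinear (R := R)).flip (F y)) E _).symm

end Matrix

section PartialTrace

variable {dA dB : ℕ} (ρ : Matrix (Fin dA × Fin dB) (Fin dA × Fin dB) ℂ)
  (A : Matrix (Fin dA) (Fin dA) ℂ) (B : Matrix (Fin dB) (Fin dB) ℂ)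

theorem ptraceB_kronecker_one_mul : ptraceB ((A ⊗ₖ 1) * ρ) = A * ptraceB ρ := by
  ext i j
  simpa [ptraceB, mul_apply, Fintype.sum_prod_type, one_apply, Finset.mul_sum] using Finset.sum_comm

theorem ptraceB_mul_kronecker_one_s5 : ptraceB (ρ * (A ⊗ₖ 1)) = ptraceB ρ * A := by
  ext i j
  simpa [ptraceB, mul_apply, Fintype.sum_prod_type, one_apply, Finset.sum_mul] using Finset.sum_comm

theorem ptraceB_one_kronecker_mul : ptraceB ((1 ⊗ₖ B) * ρ) = ptraceB (ρ * (1 ⊗ₖ B)) := by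
  ext i j
  simpa [ptraceB, mul_apply, Fintype.sum_prod_type, one_apply, mul_comm] using Finset.sum_comm

theorem ptraceA_one_kronecker_mul : ptraceA ((1 ⊗ₖ B) * ρ) = B * ptraceA ρ := by
  ext i j
  simpa [ptraceA, mul_apply, Fintype.sum_prod_type, one_apply, Finset.mul_sum] using Finset.sum_comm

theorem ptraceA_mul_one_kronecker_s5 : ptraceA (ρ * (1 ⊗ₖ B)) = ptraceA ρ * B := by
  ext i j
  simpa [ptraceA, mul_apply, Fintype.sum_prod_type, one_apply, Finset.sum_mul] using Finset.sum_comm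

theorem ptraceA_kronecker_one_mul : ptraceA ((A ⊗ₖ 1) * ρ) = ptraceA (ρ * (A ⊗ₖ 1)) := by
  ext i j
  simpa [ptraceA, mul_apply, Fintype.sum_prod_type, one_apply, mul_comm] using Finset.sum_comm

variable {ρ A B}

theorem mul_ptraceB_comm_of_kronecker_one (hL : (A ⊗ₖ 1) * ρ = (1 ⊗ₖ B) * ρ)
    (hR : ρ * (A ⊗ₖ 1) = ρ * (1 ⊗ₖ B)) : A * ptraceB ρ = ptraceB ρ * A := by
  rw [← ptraceB_kronecker_one_mul, hL, ptraceB_one_kronecker_mul, ← hR, ptraceB_mul_kronecker_one_s5]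

theorem mul_ptraceA_comm_of_kronecker_one (hL : (A ⊗ₖ 1) * ρ = (1 ⊗ₖ B) * ρ)
    (hR : ρ * (A ⊗ₖ 1) = ρ * (1 ⊗ₖ B)) : B * ptraceA ρ = ptraceA ρ * B := by
  rw [← ptraceA_one_kronecker_mul, ← hL, ptraceA_kronecker_one_mul, hR, ptraceA_mul_one_kronecker_s5]

end PartialTrace

theorem stmt_5_general
    {X Y : Type} [Fintype Y]
    {dA dB : ℕ}
    (ρ : Matrix (Fin dA × Fin dB) (Fin dA × Fin dB) ℂ)
    (hρpsd : ρ.PosSemidef)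
    (E : X → Y → Matrix (Fin dA) (Fin dA) ℂ)
    (F : X → Y → Matrix (Fin dB) (Fin dB) ℂ)
    (hE : ∀ x y, (E x y).PosSemidef) (hF : ∀ x y, (F x y).PosSemidef)
    (hE1 : ∀ x, ∑ y, E x y = 1) (hF1 : ∀ x, ∑ y, F x y = 1)
    (hsync : ∀ x a b, a ≠ b → (ρ * (E x a ⊗ₖ F x b)).trace = 0) :
    ∀ x y, E x y * ptraceB ρ = ptraceB ρ * E x y ∧ F x y * ptraceA ρ = ptraceA ρ * F x y := by
  intro x y
  have hρEF : ∀ a b, a ≠ b → ρ * (E x a ⊗ₖ F x b) = 0 := fun a b hab =>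
    hρpsd.mul_eq_zero_of_trace_mul_eq_zero_s5 ((hE x a).kronecker (hF x b)) (hsync x a b hab)
  have hEFρ : ∀ a b, a ≠ b → (E x a ⊗ₖ F x b) * ρ = 0 := fun a b hab =>
    ((hE x a).kronecker (hF x b)).mul_eq_zero_of_trace_mul_eq_zero_s5 hρpsd
      (by rw [trace_mul_comm, hsync x a b hab])
  have hR := map_kronecker_one_eq_map_one_kronecker (AddMonoidHom.mulLeft ρ) (hE1 x) (hF1 x) hρEF y
  have hL := map_kronecker_one_eq_map_one_kronecker (AddMonoidHom.mulRight ρ) (hE1 x) (hF1 x) hEFρ y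
  exact ⟨mul_ptraceB_comm_of_kronecker_one hL hR, mul_ptraceA_comm_of_kronecker_one hL hR⟩

theorem stmt_5
    {X Y : Type} [Fintype X] [Fintype Y] [Nonempty X] [Nonempty Y]
    {dA dB : ℕ}
    (ρ : Matrix (Fin dA × Fin dB) (Fin dA × Fin dB) ℂ)
    (hρpsd : ρ.PosSemidef) (hρtr : ρ.trace = 1)
    (hfullA : (ptraceA ρ).det ≠ 0) (hfullB : (ptraceB ρ).det ≠ 0)
    (E : X → Y → Matrix (Fin dA) (Fin dA) ℂ)
    (F : X → Y → Matrix (Fin dB) (Fin dB) ℂ)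
    (hE : ∀ x y, (E x y).PosSemidef) (hF : ∀ x y, (F x y).PosSemidef)
    (hE1 : ∀ x, ∑ y, E x y = 1) (hF1 : ∀ x, ∑ y, F x y = 1)
    (hsync : ∀ x a b, a ≠ b → (ρ * (E x a ⊗ₖ F x b)).trace = 0) :
    ∀ x y, E x y * ptraceB ρ = ptraceB ρ * E x y ∧ F x y * ptraceA ρ = ptraceA ρ * F x y :=
  stmt_5_general ρ hρpsd E F hE hF hE1 hF1 hsync
end

section
/- A synchronous nonsignaling correlation from the two-element input set {0,1} to a finite set Y is a local hidden variables strategy (i.e., a convex combination of deterministic function strategies) if and only if it is symmetric (p(a,b|x,x') = p(b,a|x',x)). -/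
lemma sum_pi2 {Y : Type} [Fintype Y] (g : Y → Y → ℝ) :
    ∑ f : Fin 2 → Y, g (f 0) (f 1) = ∑ a, ∑ b, g a b := by
  rw [show (∑ f : Fin 2 → Y, g (f 0) (f 1)) = ∑ q : Y × Y, g q.1 q.2 from
      Fintype.sum_equiv (piFinTwoEquiv fun _ => Y) _ _ fun f => rfl,
    Fintype.sum_prod_type]

theorem stmt_10
    {Y : Type} [Fintype Y] [DecidableEq Y] [Nonempty Y]
    (p : Y → Y → Fin 2 → Fin 2 → ℝ)
    (hpos : ∀ a b x x', 0 ≤ p a b x x')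
    (hsum : ∀ x x', ∑ a, ∑ b, p a b x x' = 1)
    (hsync : ∀ a b x, a ≠ b → p a b x x = 0)
    (hns1 : ∀ a x x' x'', ∑ b, p a b x x' = ∑ b, p a b x x'')
    (hns2 : ∀ b x x' x'', ∑ a, p a b x x' = ∑ a, p a b x'' x') :
    (∃ ν : (Fin 2 → Y) → ℝ, (∀ f, 0 ≤ ν f) ∧ (∑ f, ν f = 1) ∧
        ∀ a b x x', p a b x x' =
          ∑ f, ν f * (if a = f x then (1:ℝ) else 0) * (if b = f x' then (1:ℝ) else 0))
      ↔ (∀ a b x x', p a b x x' = p b a x' x) := by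
  have hdiag : ∀ a x, (∑ b, p a b x x) = p a a x x := fun a x =>
    Finset.sum_eq_single a (fun b _ hb => hsync a b x (Ne.symm hb)) (by simp)
  have hdiag' : ∀ a x, (∑ c, p c a x x) = p a a x x := fun a x =>
    Finset.sum_eq_single a (fun c _ hc => hsync c a x hc) (by simp)
  constructor
  · rintro ⟨ν, hν0, hν1, hp⟩ a b x x'
    rw [hp, hp]
    exact Finset.sum_congr rfl fun f _ => by ring
  · intro hsym
    refine ⟨fun f => p (f 0) (f 1) 0 1, fun f => hpos _ _ _ _, ?_, ?_⟩
    · exact (sum_pi2 fun a b => p a b 0 1).trans (hsum 0 1)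
    · intro a b x x'
      fin_cases x <;> fin_cases x'
      · -- x = 0, x' = 0
        refine Eq.trans ?_ (sum_pi2 fun a' b' => p a' b' 0 1 *
          (if a = a' then (1:ℝ) else 0) * (if b = a' then (1:ℝ) else 0)).symm
        have key : ∀ a' : Y,
            (∑ b', p a' b' 0 1 * (if a = a' then (1:ℝ) else 0) * (if b = a' then (1:ℝ) else 0))
              = if a = a' ∧ b = a' then (∑ b', p a' b' 0 1) else 0 := by
          intro a'
          by_cases h1 : a = a' <;> by_cases h2 : b = a' <;> simp [h1, h2]
        rw [Finset.sum_congr rfl fun a' _ => key a']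
        by_cases hab : a = b
        · subst hab
          simp only [and_self, Finset.sum_ite_eq, Finset.mem_univ, if_true]
          show p a a 0 0 = _
          rw [hns1 a 0 1 0, hdiag]
        · show p a b 0 0 = _
          rw [hsync a b 0 hab, Finset.sum_eq_zero]
          intro a' _
          rw [if_neg]
          rintro ⟨rfl, rfl⟩
          exact hab rfl
      · -- x = 0, x' = 1
        refine Eq.trans ?_ (sum_pi2 fun a' b' => p a' b' 0 1 *
          (if a = a' then (1:ℝ) else 0) * (if b = b' then (1:ℝ) else 0)).symm
        show p a b 0 1 = _
        simp [mul_ite, Finset.sum_ite_eq]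
      · -- x = 1, x' = 0
        refine Eq.trans ?_ (sum_pi2 fun a' b' => p a' b' 0 1 *
          (if a = b' then (1:ℝ) else 0) * (if b = a' then (1:ℝ) else 0)).symm
        show p a b 1 0 = _
        rw [hsym a b 1 0]
        simp [mul_ite, Finset.sum_ite_eq, mul_comm]
      · -- x = 1, x' = 1
        refine Eq.trans ?_ (sum_pi2 fun a' b' => p a' b' 0 1 *
          (if a = b' then (1:ℝ) else 0) * (if b = b' then (1:ℝ) else 0)).symm
        rw [Finset.sum_comm]
        have key : ∀ b' : Y,
            (∑ a', p a' b' 0 1 * (if a = b' then (1:ℝ) else 0) * (if b = b' then (1:ℝ) else 0))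
              = if a = b' ∧ b = b' then (∑ a', p a' b' 0 1) else 0 := by
          intro b'
          by_cases h1 : a = b' <;> by_cases h2 : b = b' <;> simp [h1, h2]
        rw [Finset.sum_congr rfl fun b' _ => key b']
        by_cases hab : a = b
        · subst hab
          simp only [and_self, Finset.sum_ite_eq, Finset.mem_univ, if_true]
          show p a a 1 1 = _
          rw [hns2 a 0 1 1, hdiag']
        · show p a b 1 1 = _
          rw [hsync a b 1 hab, Finset.sum_eq_zero]
          intro b' _
          rw [if_neg]
          rintro ⟨rfl, rfl⟩
          exact hab rfl
end

section
/- Every synchronous quantum correlation of the form p(a,b|x,x') = (1/d) tr(E^x_a E^{x'}_b) from the two-element input set {0,1} to a finite set Y is classical: there exists a probability distribution ν on functions {0,1} → Y with p(a,b|x,x') = Σ_f ν(f) 1[a=f(x)] 1[b=f(x')]. -/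
open Matrix

lemma aux_re_trace_nonneg {d : ℕ} (A : Matrix (Fin d) (Fin d) ℂ) :
    0 ≤ ((Aᴴ * A).trace).re := by
  simp only [Matrix.trace, Matrix.diag, Matrix.mul_apply, Matrix.conjTranspose_apply]
  rw [Complex.re_sum]
  refine Finset.sum_nonneg fun i _ => ?_
  rw [Complex.re_sum]
  refine Finset.sum_nonneg fun j _ => ?_
  rw [show star (A j i) = (starRingEnd ℂ) (A j i) from rfl, mul_comm, Complex.mul_conj]
  exact_mod_cast Complex.normSq_nonneg _

lemma aux_trace_proj_mul_nonneg {d : ℕ} (P Q : Matrix (Fin d) (Fin d) ℂ)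
    (hP : P.IsHermitian) (hQ : Q.IsHermitian) (hP2 : P * P = P) (hQ2 : Q * Q = Q) :
    0 ≤ ((P * Q).trace).re := by
  have key : (P * Q).trace = ((P * Q)ᴴ * (P * Q)).trace := by
    rw [conjTranspose_mul, hP.eq, hQ.eq]
    have : Q * P * (P * Q) = Q * (P * Q) := by
      rw [mul_assoc, ← mul_assoc P P Q, hP2]
    rw [this, Matrix.trace_mul_comm Q (P * Q), mul_assoc, hQ2]
  rw [key]
  exact aux_re_trace_nonneg _

lemma aux_sum2 {Y : Type} [Fintype Y] {M : Type*} [AddCommMonoid M] (g : Y → Y → M) :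
    ∑ f : Fin 2 → Y, g (f 0) (f 1) = ∑ y0, ∑ y1, g y0 y1 := by
  calc ∑ f : Fin 2 → Y, g (f 0) (f 1) = ∑ q : Y × Y, g q.1 q.2 :=
        Fintype.sum_equiv (piFinTwoEquiv fun _ => Y) _ _ (fun f => rfl)
    _ = ∑ y0, ∑ y1, g y0 y1 := Fintype.sum_prod_type _

theorem stmt_11
    {Y : Type} [Fintype Y] [DecidableEq Y] [Nonempty Y]
    {d : ℕ} (hd : 1 ≤ d)
    (E : Fin 2 → Y → Matrix (Fin d) (Fin d) ℂ)
    (hherm : ∀ x y, (E x y).IsHermitian)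
    (hidem : ∀ x y, E x y * E x y = E x y)
    (horth : ∀ x y y', y ≠ y' → E x y * E x y' = 0)
    (hsum : ∀ x, ∑ y, E x y = 1)
    (p : Y → Y → Fin 2 → Fin 2 → ℝ)
    (hp : ∀ a b x x', p a b x x' = (1 / d) * ((E x a * E x' b).trace).re) :
    ∃ ν : (Fin 2 → Y) → ℝ, (∀ f, 0 ≤ ν f) ∧ (∑ f, ν f = 1) ∧
      ∀ a b x x', p a b x x' =
        ∑ f, ν f * (if a = f x then (1:ℝ) else 0) * (if b = f x' then (1:ℝ) else 0) := by
  have hd0 : (d : ℝ) ≠ 0 := Nat.cast_ne_zero.mpr (by omega)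
  have hmarg : ∀ y0 : Y, ∑ y1, ((E 0 y0 * E 1 y1).trace).re = ((E 0 y0).trace).re := by
    intro y0
    rw [← Complex.re_sum, ← Matrix.trace_sum, ← Finset.mul_sum, hsum, mul_one]
  have hmarg' : ∀ y1 : Y, ∑ y0, ((E 0 y0 * E 1 y1).trace).re = ((E 1 y1).trace).re := by
    intro y1
    rw [← Complex.re_sum, ← Matrix.trace_sum, ← Finset.sum_mul, hsum, one_mul]
  refine ⟨fun f => (1 / d) * ((E 0 (f 0) * E 1 (f 1)).trace).re, ?_, ?_, ?_⟩
  · intro f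
    have := aux_trace_proj_mul_nonneg (E 0 (f 0)) (E 1 (f 1)) (hherm _ _) (hherm _ _)
      (hidem _ _) (hidem _ _)
    positivity
  · rw [aux_sum2 (fun y0 y1 => (1 / d) * ((E 0 y0 * E 1 y1).trace).re)]
    simp_rw [← Finset.mul_sum, hmarg]
    rw [← Complex.re_sum, ← Matrix.trace_sum, hsum, Matrix.trace_one]
    simp [hd0]
  · intro a b x x'
    rw [hp]
    have h2 : ∀ z : Fin 2, z = 0 ∨ z = 1 := by decide
    simp only []
    rcases h2 x with rfl | rfl <;> rcases h2 x' with rfl | rfl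
    · -- x = 0, x' = 0
      rw [aux_sum2 (fun y0 y1 => ((1 / d) * ((E 0 y0 * E 1 y1).trace).re)
        * (if a = y0 then (1:ℝ) else 0) * (if b = y0 then (1:ℝ) else 0))]
      by_cases hab : a = b
      · subst hab
        have key : ∀ y0 : Y, (∑ y1, ((1 / (d:ℝ)) * ((E 0 y0 * E 1 y1).trace).re)
            * (if a = y0 then (1:ℝ) else 0) * (if a = y0 then (1:ℝ) else 0))
            = (if a = y0 then (1 / (d:ℝ)) * ((E 0 y0).trace).re else 0) := by
          intro y0
          by_cases h : a = y0
          · simp [h, ← Finset.mul_sum, hmarg]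
          · simp [h]
        rw [Finset.sum_congr rfl fun y0 _ => key y0, Finset.sum_ite_eq, hidem 0 a]
        simp
      · rw [horth 0 a b hab]
        simp only [Matrix.trace_zero, Complex.zero_re, mul_zero]
        symm
        refine Finset.sum_eq_zero fun y0 _ => ?_
        by_cases h : a = y0
        · subst h; simp [Ne.symm hab]
        · simp [h]
    · -- x = 0, x' = 1
      rw [aux_sum2 (fun y0 y1 => ((1 / d) * ((E 0 y0 * E 1 y1).trace).re)
        * (if a = y0 then (1:ℝ) else 0) * (if b = y1 then (1:ℝ) else 0))]
      simp [mul_ite, mul_one, mul_zero, Finset.sum_ite_eq]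
    · -- x = 1, x' = 0
      rw [aux_sum2 (fun y0 y1 => ((1 / d) * ((E 0 y0 * E 1 y1).trace).re)
        * (if a = y1 then (1:ℝ) else 0) * (if b = y0 then (1:ℝ) else 0))]
      rw [Matrix.trace_mul_comm]
      rw [Finset.sum_comm]
      simp [mul_ite, mul_one, mul_zero, Finset.sum_ite_eq]
    · -- x = 1, x' = 1
      rw [aux_sum2 (fun y0 y1 => ((1 / d) * ((E 0 y0 * E 1 y1).trace).re)
        * (if a = y1 then (1:ℝ) else 0) * (if b = y1 then (1:ℝ) else 0))]
      rw [Finset.sum_comm]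
      by_cases hab : a = b
      · subst hab
        have key : ∀ y1 : Y, (∑ y0, ((1 / (d:ℝ)) * ((E 0 y0 * E 1 y1).trace).re)
            * (if a = y1 then (1:ℝ) else 0) * (if a = y1 then (1:ℝ) else 0))
            = (if a = y1 then (1 / (d:ℝ)) * ((E 1 y1).trace).re else 0) := by
          intro y1
          by_cases h : a = y1
          · simp [h, ← Finset.mul_sum, hmarg']
          · simp [h]
        rw [Finset.sum_congr rfl fun y1 _ => key y1, Finset.sum_ite_eq, hidem 1 a]
        simp
      · rw [horth 1 a b hab]
        simp only [Matrix.trace_zero, Complex.zero_re, mul_zero]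
        symm
        refine Finset.sum_eq_zero fun y1 _ => ?_
        by_cases h : a = y1
        · subst h; simp [Ne.symm hab]
        · simp [h]
end

section
/- Let w : X × X → ℝ be nonnegative and satisfy, for all x, x' ∈ X: w(x,x') ≤ w(x,x), w(x,x') ≤ w(x',x'), and w(x,x) + w(x',x') ≤ 1 + w(x,x'). Define p(0,0|x,x') = 1 + w(x,x') − w(x,x) − w(x',x'), p(0,1|x,x') = w(x',x') − w(x,x'), p(1,0|x,x') = w(x,x) − w(x,x'), p(1,1|x,x') = w(x,x'). Then p is a synchronous nonsignaling correlation from X to {0,1}. -/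
theorem stmt_12
    {X : Type} [Fintype X] [DecidableEq X] (hX : 2 ≤ Fintype.card X)
    (w : X → X → ℝ)
    (hw0 : ∀ x x', 0 ≤ w x x')
    (hw1 : ∀ x x', w x x' ≤ w x x)
    (hw2 : ∀ x x', w x x' ≤ w x' x')
    (hw3 : ∀ x x', w x x + w x' x' ≤ 1 + w x x')
    (p : Fin 2 → Fin 2 → X → X → ℝ)
    (hp00 : ∀ x x', p 0 0 x x' = 1 + w x x' - w x x - w x' x')
    (hp01 : ∀ x x', p 0 1 x x' = w x' x' - w x x')
    (hp10 : ∀ x x', p 1 0 x x' = w x x - w x x')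
    (hp11 : ∀ x x', p 1 1 x x' = w x x') :
    (∀ a b x x', 0 ≤ p a b x x') ∧
    (∀ x x', ∑ a, ∑ b, p a b x x' = 1) ∧
    (∀ a b x, a ≠ b → p a b x x = 0) ∧
    (∀ a x x' x'', ∑ b, p a b x x' = ∑ b, p a b x x'') ∧
    (∀ b x x' x'', ∑ a, p a b x x' = ∑ a, p a b x'' x') := by
  refine ⟨?_, ?_, ?_, ?_, ?_⟩
  · intro a b x x'
    match a, b with
    | 0, 0 => rw [hp00]; linarith [hw3 x x']
    | 0, 1 => rw [hp01]; linarith [hw2 x x']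
    | 1, 0 => rw [hp10]; linarith [hw1 x x']
    | 1, 1 => rw [hp11]; exact hw0 x x'
  · intro x x'
    simp only [Fin.sum_univ_two, hp00, hp01, hp10, hp11]
    ring
  · intro a b x hab
    match a, b with
    | 0, 0 => exact absurd rfl hab
    | 1, 1 => exact absurd rfl hab
    | 0, 1 => rw [hp01]; ring
    | 1, 0 => rw [hp10]; ring
  · intro a x x' x''
    match a with
    | 0 => simp only [Fin.sum_univ_two, hp00, hp01]; ring
    | 1 => simp only [Fin.sum_univ_two, hp10, hp11]; ring
  · intro b x x' x''
    match b with
    | 0 => simp only [Fin.sum_univ_two, hp00, hp10]; ring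
    | 1 => simp only [Fin.sum_univ_two, hp01, hp11]; ring
end

section
/- For every synchronous nonsignaling correlation p from X to {0,1}, the function w(x,x') := p(1,1|x,x') is nonnegative and satisfies w(x,x') ≤ w(x,x), w(x,x') ≤ w(x',x'), w(x,x) + w(x',x') ≤ 1 + w(x,x'), and moreover p(1,0|x,x') = w(x,x) − w(x,x'), p(0,1|x,x') = w(x',x') − w(x,x'), p(0,0|x,x') = 1 + w(x,x') − w(x,x) − w(x',x'). -/
theorem stmt_13
    {X : Type} [Fintype X] [Nonempty X]
    (p : Fin 2 → Fin 2 → X → X → ℝ)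
    (hpos : ∀ a b x x', 0 ≤ p a b x x')
    (hsum : ∀ x x', ∑ a, ∑ b, p a b x x' = 1)
    (hsync : ∀ a b x, a ≠ b → p a b x x = 0)
    (hns1 : ∀ a x x' x'', ∑ b, p a b x x' = ∑ b, p a b x x'')
    (hns2 : ∀ b x x' x'', ∑ a, p a b x x' = ∑ a, p a b x'' x') :
    ∀ x x',
      (0 ≤ p 1 1 x x') ∧
      (p 1 1 x x' ≤ p 1 1 x x) ∧
      (p 1 1 x x' ≤ p 1 1 x' x') ∧
      (p 1 1 x x + p 1 1 x' x' ≤ 1 + p 1 1 x x') ∧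
      (p 1 0 x x' = p 1 1 x x - p 1 1 x x') ∧
      (p 0 1 x x' = p 1 1 x' x' - p 1 1 x x') ∧
      (p 0 0 x x' = 1 + p 1 1 x x' - p 1 1 x x - p 1 1 x' x') := by
  intro x x'
  have h1 := hns1 1 x x' x
  have h2 := hns2 1 x x' x'
  have hs := hsum x x'
  simp only [Fin.sum_univ_two] at h1 h2 hs
  have e10 : p 1 0 x x = 0 := hsync 1 0 x (by decide)
  have e01 : p 0 1 x' x' = 0 := hsync 0 1 x' (by decide)
  have a1 := hpos 0 0 x x'
  have a2 := hpos 0 1 x x'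
  have a3 := hpos 1 0 x x'
  have a4 := hpos 1 1 x x'
  refine ⟨a4, ?_, ?_, ?_, ?_, ?_, ?_⟩ <;> linarith
end

section
/- Let {E^x_0, E^x_1} for x ∈ {0,1,2} be projection-valued measures on ℂ^d (so E^x_0 + E^x_1 = I, each an orthogonal projection), and let p(a,b|x,x') = (1/d) tr(E^x_a E^{x'}_b), w(x,x') = p(1,1|x,x'). Then the Bell quantity J₀ = w(0,0) − w(0,1) + w(1,1) − w(0,2) − w(1,2) + w(2,2) satisfies J₀ ≤ 9/8. -/
open Matrix

private lemma trace_sq_re_nonneg {n : ℕ} (S : Matrix (Fin n) (Fin n) ℂ) (hS : Sᴴ = S) :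
    0 ≤ ((S * S).trace).re := by
  rw [show S * S = Sᴴ * S from by rw [hS]]
  simp only [Matrix.trace, Matrix.diag, Matrix.mul_apply, Matrix.conjTranspose_apply]
  rw [Complex.re_sum]
  refine Finset.sum_nonneg fun i _ => ?_
  rw [Complex.re_sum]
  refine Finset.sum_nonneg fun j _ => ?_
  rw [show star (S j i) * S j i = ((Complex.normSq (S j i) : ℝ) : ℂ) by
    rw [Complex.star_def, Complex.normSq_eq_conj_mul_self]]
  simpa using Complex.normSq_nonneg (S j i)

theorem stmt_16
    {d : ℕ} (hd : 1 ≤ d)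
    (E : Fin 3 → Fin 2 → Matrix (Fin d) (Fin d) ℂ)
    (hherm : ∀ x y, (E x y).IsHermitian)
    (hidem : ∀ x y, E x y * E x y = E x y)
    (hsum : ∀ x, E x 0 + E x 1 = 1)
    (p : Fin 2 → Fin 2 → Fin 3 → Fin 3 → ℝ)
    (hp : ∀ a b x x', p a b x x' = (1 / d) * ((E x a * E x' b).trace).re)
    (w : Fin 3 → Fin 3 → ℝ) (hw : ∀ x x', w x x' = p 1 1 x x') :
    w 0 0 - w 0 1 + w 1 1 - w 0 2 - w 1 2 + w 2 2 ≤ 9 / 8 := by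
  set Q : Matrix (Fin d) (Fin d) ℂ := E 0 1 + E 1 1 + E 2 1 with hQdef
  set S : Matrix (Fin d) (Fin d) ℂ := (3 : ℂ) • (1 : Matrix (Fin d) (Fin d) ℂ) - (2 : ℂ) • Q
    with hSdef
  have hQ : Qᴴ = Q := by
    rw [hQdef, Matrix.conjTranspose_add, Matrix.conjTranspose_add,
      (hherm 0 1).eq, (hherm 1 1).eq, (hherm 2 1).eq]
  have hS : Sᴴ = S := by
    rw [hSdef, Matrix.conjTranspose_sub, Matrix.conjTranspose_smul, Matrix.conjTranspose_smul,
      Matrix.conjTranspose_one, hQ]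
    norm_num
  have key := trace_sq_re_nonneg S hS
  have hmul : S * S = (9 : ℂ) • (1 : Matrix (Fin d) (Fin d) ℂ) - (12 : ℂ) • Q
      + (4 : ℂ) • (Q * Q) := by
    rw [hSdef]
    simp only [sub_mul, mul_sub, Matrix.smul_mul, Matrix.mul_smul, smul_smul, one_mul, mul_one]
    module
  have hQtr : Q.trace = (E 0 1 * E 0 1).trace + (E 1 1 * E 1 1).trace + (E 2 1 * E 2 1).trace := by
    have h0 : (E 0 1).trace = (E 0 1 * E 0 1).trace := by rw [hidem 0 1]
    have h1 : (E 1 1).trace = (E 1 1 * E 1 1).trace := by rw [hidem 1 1]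
    have h2 : (E 2 1).trace = (E 2 1 * E 2 1).trace := by rw [hidem 2 1]
    rw [hQdef, Matrix.trace_add, Matrix.trace_add, h0, h1, h2]
  have hsym : ∀ i j : Fin 3, (E j 1 * E i 1).trace = (E i 1 * E j 1).trace := fun i j =>
    Matrix.trace_mul_comm _ _
  have hQQtr : (Q * Q).trace =
      (E 0 1 * E 0 1).trace + (E 1 1 * E 1 1).trace + (E 2 1 * E 2 1).trace
      + 2 * ((E 0 1 * E 1 1).trace + (E 0 1 * E 2 1).trace + (E 1 1 * E 2 1).trace) := by
    rw [hQdef]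
    simp only [add_mul, mul_add, Matrix.trace_add]
    rw [hsym 0 1, hsym 0 2, hsym 1 2]
    ring
  have htr : (S * S).trace = 9 * (d : ℂ)
      - 8 * ((E 0 1 * E 0 1).trace + (E 1 1 * E 1 1).trace + (E 2 1 * E 2 1).trace)
      + 8 * ((E 0 1 * E 1 1).trace + (E 0 1 * E 2 1).trace + (E 1 1 * E 2 1).trace) := by
    rw [hmul]
    simp only [Matrix.trace_add, Matrix.trace_sub, Matrix.trace_smul, Matrix.trace_one,
      smul_eq_mul, Fintype.card_fin]
    rw [hQtr, hQQtr]
    ring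
  rw [htr] at key
  simp only [Complex.add_re, Complex.sub_re, Complex.mul_re, Complex.re_ofNat, Complex.im_ofNat,
    Complex.natCast_re, Complex.natCast_im, Complex.add_im, mul_zero, zero_mul, sub_zero] at key
  have hd' : (0 : ℝ) < d := by exact_mod_cast hd
  have hoff : ∀ i j : Fin 3, w i j = (1 / d) * ((E i 1 * E j 1).trace).re := by
    intro i j; rw [hw, hp]
  rw [hoff 0 0, hoff 0 1, hoff 1 1, hoff 0 2, hoff 1 2, hoff 2 2]
  rw [show (1 / (d:ℝ)) * ((E 0 1 * E 0 1).trace).re - (1 / d) * ((E 0 1 * E 1 1).trace).re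
      + (1 / d) * ((E 1 1 * E 1 1).trace).re - (1 / d) * ((E 0 1 * E 2 1).trace).re
      - (1 / d) * ((E 1 1 * E 2 1).trace).re + (1 / d) * ((E 2 1 * E 2 1).trace).re
      = (((E 0 1 * E 0 1).trace).re + ((E 1 1 * E 1 1).trace).re + ((E 2 1 * E 2 1).trace).re
        - (((E 0 1 * E 1 1).trace).re + ((E 0 1 * E 2 1).trace).re
          + ((E 1 1 * E 2 1).trace).re)) / d by ring]
  rw [div_le_iff₀ hd']
  linarith [key]
end

section
/- With M_x = E^x_0 − E^x_1 for projection-valued measures {E^x_0,E^x_1} on ℂ^d and m_{xx'} = (1/d)tr(M_x M_{x'}), the quantities J₁ = (1/4)(1 − m_{01} − m_{02} + m_{12}), J₂ = (1/4)(1 − m_{01} + m_{02} − m_{12}), J₃ = (1/4)(1 + m_{01} − m_{02} − m_{12}) all satisfy J_i ≥ −1/8, via the identities 8J₁ + 1 = (1/d)tr((−M₀+M₁+M₂)²), 8J₂ + 1 = (1/d)tr((M₀−M₁+M₂)²), 8J₃ + 1 = (1/d)tr((M₀+M₁−M₂)²). -/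
open Matrix

lemma aux_trace_sq_nonneg {d : ℕ} (A : Matrix (Fin d) (Fin d) ℂ)
    (hA : A.IsHermitian) : 0 ≤ ((A * A).trace).re := by
  have h : A * A = Aᴴ * A := by rw [hA.eq]
  rw [h, Matrix.trace]
  simp only [Matrix.diag, Matrix.mul_apply, Matrix.conjTranspose_apply]
  rw [Complex.re_sum]
  refine Finset.sum_nonneg fun i _ => ?_
  rw [Complex.re_sum]
  refine Finset.sum_nonneg fun j _ => ?_
  simp only [Complex.star_def, Complex.mul_re, Complex.conj_re, Complex.conj_im]
  nlinarith [sq_nonneg (A j i).re, sq_nonneg (A j i).im]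

lemma aux_expand {d : ℕ} (a b c : Matrix (Fin d) (Fin d) ℂ)
    (ha : a * a = 1) (hb : b * b = 1) (hc : c * c = 1) :
    ((a + b + c) * (a + b + c)).trace
      = 3 * (d : ℂ) + 2 * (a * b).trace + 2 * (a * c).trace + 2 * (b * c).trace := by
  simp only [add_mul, mul_add, Matrix.trace_add, ha, hb, hc, Matrix.trace_one,
    Matrix.trace_mul_comm b a, Matrix.trace_mul_comm c a, Matrix.trace_mul_comm c b]
  simp [Fintype.card_fin]
  ring

theorem stmt_17
    {d : ℕ} (hd : 1 ≤ d)
    (E : Fin 3 → Fin 2 → Matrix (Fin d) (Fin d) ℂ)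
    (hherm : ∀ x y, (E x y).IsHermitian)
    (hidem : ∀ x y, E x y * E x y = E x y)
    (hsum : ∀ x, E x 0 + E x 1 = 1)
    (M : Fin 3 → Matrix (Fin d) (Fin d) ℂ)
    (hM : ∀ x, M x = E x 0 - E x 1)
    (m : Fin 3 → Fin 3 → ℝ)
    (hm : ∀ x x', m x x' = (1 / d) * ((M x * M x').trace).re) :
    (8 * ((1 / 4) * (1 - m 0 1 - m 0 2 + m 1 2)) + 1
        = (1 / d) * (((-M 0 + M 1 + M 2) * (-M 0 + M 1 + M 2)).trace).re) ∧
    (8 * ((1 / 4) * (1 - m 0 1 + m 0 2 - m 1 2)) + 1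
        = (1 / d) * (((M 0 - M 1 + M 2) * (M 0 - M 1 + M 2)).trace).re) ∧
    (8 * ((1 / 4) * (1 + m 0 1 - m 0 2 - m 1 2)) + 1
        = (1 / d) * (((M 0 + M 1 - M 2) * (M 0 + M 1 - M 2)).trace).re) ∧
    (-(1 / 8) ≤ (1 / 4) * (1 - m 0 1 - m 0 2 + m 1 2)) ∧
    (-(1 / 8) ≤ (1 / 4) * (1 - m 0 1 + m 0 2 - m 1 2)) ∧
    (-(1 / 8) ≤ (1 / 4) * (1 + m 0 1 - m 0 2 - m 1 2)) := by
  have hdpos : (0:ℝ) < (d:ℝ) := by exact_mod_cast hd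
  -- M x squares to 1
  have hsq : ∀ x, M x * M x = 1 := by
    intro x
    have h1 : E x 1 = 1 - E x 0 := eq_sub_of_add_eq' (hsum x)
    have h2 := hidem x 0
    rw [hM, h1]
    have : (E x 0 - (1 - E x 0)) * (E x 0 - (1 - E x 0))
        = 4 * (E x 0 * E x 0) - 4 * E x 0 + 1 := by noncomm_ring
    rw [this, h2]
    noncomm_ring
  have hMherm : ∀ x, (M x).IsHermitian := fun x => by
    rw [hM]; exact (hherm x 0).sub (hherm x 1)
  -- notation for real parts of cross traces
  set r01 := ((M 0 * M 1).trace).re with hr01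
  set r02 := ((M 0 * M 2).trace).re with hr02
  set r12 := ((M 1 * M 2).trace).re with hr12
  have hm01 : m 0 1 = (1 / d) * r01 := hm 0 1
  have hm02 : m 0 2 = (1 / d) * r02 := hm 0 2
  have hm12 : m 1 2 = (1 / d) * r12 := hm 1 2
  -- three trace identities
  have e1 : (((-M 0 + M 1 + M 2) * (-M 0 + M 1 + M 2)).trace).re
      = 3 * (d:ℝ) - 2 * r01 - 2 * r02 + 2 * r12 := by
    have := aux_expand (-M 0) (M 1) (M 2)
      (by rw [neg_mul_neg]; exact hsq 0) (hsq 1) (hsq 2)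
    rw [this]
    simp [Matrix.trace_neg, hr01, hr02, hr12]
    ring
  have e2 : (((M 0 - M 1 + M 2) * (M 0 - M 1 + M 2)).trace).re
      = 3 * (d:ℝ) - 2 * r01 + 2 * r02 - 2 * r12 := by
    have := aux_expand (M 0) (-M 1) (M 2)
      (hsq 0) (by rw [neg_mul_neg]; exact hsq 1) (hsq 2)
    rw [show M 0 - M 1 + M 2 = M 0 + -M 1 + M 2 by rw [sub_eq_add_neg], this]
    simp [Matrix.trace_neg, hr01, hr02, hr12]
    ring
  have e3 : (((M 0 + M 1 - M 2) * (M 0 + M 1 - M 2)).trace).re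
      = 3 * (d:ℝ) + 2 * r01 - 2 * r02 - 2 * r12 := by
    have := aux_expand (M 0) (M 1) (-M 2)
      (hsq 0) (hsq 1) (by rw [neg_mul_neg]; exact hsq 2)
    rw [show M 0 + M 1 - M 2 = M 0 + M 1 + -M 2 by rw [sub_eq_add_neg], this]
    simp [Matrix.trace_neg, hr01, hr02, hr12]
    ring
  -- nonnegativity
  have n1 : 0 ≤ (((-M 0 + M 1 + M 2) * (-M 0 + M 1 + M 2)).trace).re :=
    aux_trace_sq_nonneg _ (((hMherm 0).neg.add (hMherm 1)).add (hMherm 2))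
  have n2 : 0 ≤ (((M 0 - M 1 + M 2) * (M 0 - M 1 + M 2)).trace).re :=
    aux_trace_sq_nonneg _ (((hMherm 0).sub (hMherm 1)).add (hMherm 2))
  have n3 : 0 ≤ (((M 0 + M 1 - M 2) * (M 0 + M 1 - M 2)).trace).re :=
    aux_trace_sq_nonneg _ (((hMherm 0).add (hMherm 1)).sub (hMherm 2))
  have g1 : 8 * ((1 / 4) * (1 - m 0 1 - m 0 2 + m 1 2)) + 1
      = (1 / d) * (((-M 0 + M 1 + M 2) * (-M 0 + M 1 + M 2)).trace).re := by
    rw [e1, hm01, hm02, hm12]; field_simp; ring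
  have g2 : 8 * ((1 / 4) * (1 - m 0 1 + m 0 2 - m 1 2)) + 1
      = (1 / d) * (((M 0 - M 1 + M 2) * (M 0 - M 1 + M 2)).trace).re := by
    rw [e2, hm01, hm02, hm12]; field_simp; ring
  have g3 : 8 * ((1 / 4) * (1 + m 0 1 - m 0 2 - m 1 2)) + 1
      = (1 / d) * (((M 0 + M 1 - M 2) * (M 0 + M 1 - M 2)).trace).re := by
    rw [e3, hm01, hm02, hm12]; field_simp; ring
  refine ⟨g1, g2, g3, ?_, ?_, ?_⟩
  · nlinarith [mul_nonneg (le_of_lt (by positivity : (0:ℝ) < 1/(d:ℝ))) n1]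
  · nlinarith [mul_nonneg (le_of_lt (by positivity : (0:ℝ) < 1/(d:ℝ))) n2]
  · nlinarith [mul_nonneg (le_of_lt (by positivity : (0:ℝ) < 1/(d:ℝ))) n3]
end

section
/- Define on ℂ² the projections E^0_1 = |1⟩⟨1|, E^1_1 = |φ₁⟩⟨φ₁| with |φ₁⟩ = (√3/2)|0⟩ + (1/2)|1⟩, and E^2_1 = |φ₂⟩⟨φ₂| with |φ₂⟩ = (√3/2)|0⟩ − (1/2)|1⟩, with E^x_0 = I − E^x_1. Then the synchronous quantum correlation p(a,b|x,x') = (1/2)tr(E^x_a E^{x'}_b) satisfies J₀ = w(0,0) − w(0,1) + w(1,1) − w(0,2) − w(1,2) + w(2,2) = 9/8, where w(x,x') = p(1,1|x,x'); in particular it violates the classical Bell inequality J₀ ≤ 1 and saturates the quantum bound 9/8. -/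
open Matrix

noncomputable def bellPhi : Fin 3 → Fin 2 → ℂ
  | 0 => ![0, 1]
  | 1 => ![Real.sqrt 3 / 2, 1 / 2]
  | 2 => ![Real.sqrt 3 / 2, -(1 / 2)]

theorem stmt_18
    (E : Fin 3 → Fin 2 → Matrix (Fin 2) (Fin 2) ℂ)
    (hE1 : ∀ x, E x 1 = vecMulVec (bellPhi x) (star (bellPhi x)))
    (hE0 : ∀ x, E x 0 = 1 - E x 1)
    (p : Fin 2 → Fin 2 → Fin 3 → Fin 3 → ℝ)
    (hp : ∀ a b x x', p a b x x' = (1 / 2) * ((E x a * E x' b).trace).re)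
    (w : Fin 3 → Fin 3 → ℝ) (hw : ∀ x x', w x x' = p 1 1 x x') :
    (w 0 0 - w 0 1 + w 1 1 - w 0 2 - w 1 2 + w 2 2 = 9 / 8) ∧
    (1 < w 0 0 - w 0 1 + w 1 1 - w 0 2 - w 1 2 + w 2 2) := by
  have h3 : (Real.sqrt 3) ^ 2 = 3 := Real.sq_sqrt (by norm_num)
  simp only [hw, hp, hE1, bellPhi, Matrix.trace, Matrix.mul_apply, Matrix.diag,
    Fin.sum_univ_succ, Fin.sum_univ_zero, vecMulVec_apply, Pi.star_apply,
    Matrix.cons_val_zero, Matrix.cons_val_one, Matrix.head_cons]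
  simp [Complex.add_re, Complex.mul_re, Complex.ofReal_re]
  constructor <;> nlinarith [h3, sq_nonneg (Real.sqrt 3)]
end
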